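/- arXiv:1605.04340 — 2 statements merged into one kernel-verified Lean document; each statement's English description precedes it below -/
import Mathlib

section
/- For n ≥ 2, let U_n be the polynomial with rational coefficients in the variables δ_1, …, δ_{n−1} defined by U_n := (1/n!) · Σ_T Π_{v} δ_{deg_T(v)}, where the sum runs over all trees T on the labeled vertex set {1,…,n} and deg_T(v) is the degree of vertex v in T. Then U_2(δ_1) = δ_1²/2 and, for every n ≥ 3, U_n(δ_1,…,δ_{n−1}) = δ_2 · U_{n−1}(δ_1,…,δ_{n−2}) + Σ_{i=2}^{n−2} δ_{i+1} · J_i(δ_1,…,δ_{n−2}), where J_i is the unique polynomial whose partial derivative with respect to δ_1 equals ∂U_{n−1}/∂δ_i and which vanishes at δ_1 = 0 (i.e. J_i(δ_1,…) = ∫_0^{δ_1} (∂U_{n−1}/∂δ_i)(x, δ_2,…,δ_{n−2}) dx). -/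
open MvPolynomial

/-- The degree of a vertex `v` in a simple graph `G`, as the number of its neighbors. -/
noncomputable def vdeg {V : Type*} (G : SimpleGraph V) (v : V) : ℕ :=
  (G.neighborSet v).ncard

/-- `Upoly n = (1/n!) ∑_T ∏_v δ_{deg_T v}`, summed over all trees `T` on `{1,…,n}`;
the variable `X i` plays the role of `δ_i`. -/
noncomputable def Upoly (n : ℕ) : MvPolynomial ℕ ℚ := by
  classical
  exact (1 / (n.factorial : ℚ)) •
    ∑ G ∈ Finset.univ.filter (fun G : SimpleGraph (Fin n) => G.IsTree),
      ∏ v : Fin n, MvPolynomial.X (vdeg G v)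

/-!
Differentiating `∏_v δ_{deg v}` with respect to `δ_1` deletes one leaf `ℓ` at a time. Trees with
`ℓ` as a leaf are obtained exactly once by grafting `ℓ` onto a vertex `v` of a tree on the other
vertices, which raises the degree of `v` by one; after relabelling, the sum no longer depends on `ℓ`.
Hence `∂U_{n+1}/∂δ_1 = ∑_i δ_{i+1} ∂U_n/∂δ_i`. By the hypothesis on the `J_i`, the two sides of
the recurrence have the same `δ_1`-derivative, and both vanish at `δ_1 = 0` because every tree on
at least two vertices has a leaf; over `ℚ` this forces them to be equal. The same argument
started from `U_1 = δ_0` gives `U_2`.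
-/

open Finset SimpleGraph

theorem Derivation.leibniz_prod {R A M ι : Type*} [CommSemiring R] [CommSemiring A] [Algebra R A]
    [AddCommMonoid M] [Module A M] [Module R M] [DecidableEq ι] (D : Derivation R A M)
    (s : Finset ι) (f : ι → A) :
    D (∏ i ∈ s, f i) = ∑ i ∈ s, (∏ j ∈ s.erase i, f j) • D (f i) := by
  induction s using Finset.induction_on with
  | empty => simp
  | insert a s ha ih =>
    rw [prod_insert ha, Derivation.leibniz, ih, sum_insert ha, erase_insert ha, smul_sum,
      add_comm]
    congr 1
    refine sum_congr rfl fun i hi => ?_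
    rw [erase_insert_of_ne (ne_of_mem_of_not_mem hi ha).symm,
      prod_insert (fun h => ha (mem_of_mem_erase h)), mul_smul]

namespace MvPolynomial

variable {R σ ι : Type*} [CommSemiring R]

theorem pderiv_prod_X [DecidableEq ι] [DecidableEq σ] (k : σ) (s : Finset ι) (d : ι → σ) :
    pderiv k (∏ v ∈ s, (X (d v) : MvPolynomial σ R)) =
      ∑ v ∈ s with d v = k, ∏ w ∈ s.erase v, X (d w) := by
  rw [Derivation.leibniz_prod, sum_filter]
  refine sum_congr rfl fun v _ => ?_
  rw [pderiv_X, Pi.single_apply]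
  split_ifs <;> simp

theorem pderiv_prod_X_eq_zero [DecidableEq σ] {k : σ} {s : Finset ι} {d : ι → σ}
    (hd : ∀ v ∈ s, d v ≠ k) : pderiv k (∏ v ∈ s, (X (d v) : MvPolynomial σ R)) = 0 := by
  classical
  rw [pderiv_prod_X, filter_false_of_mem hd, sum_empty]

theorem sum_X_mul_pderiv_prod_X [DecidableEq ι] [DecidableEq σ] (f : σ → σ) {s : Finset ι}
    {d : ι → σ} {I : Finset σ} (hd : ∀ v ∈ s, d v ∈ I) :
    ∑ i ∈ I, X (f i) * pderiv i (∏ v ∈ s, (X (d v) : MvPolynomial σ R)) =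
      ∑ v ∈ s, X (f (d v)) * ∏ w ∈ s.erase v, X (d w) := by
  rw [← sum_fiberwise_of_maps_to hd]
  refine sum_congr rfl fun i _ => ?_
  rw [pderiv_prod_X, mul_sum]
  exact sum_congr rfl fun v hv => by rw [(mem_filter.mp hv).2]

theorem aeval_prod_X_eq_zero [DecidableEq σ] {k : σ} {s : Finset ι} {d : ι → σ}
    (hd : ∃ v ∈ s, d v = k) :
    aeval (fun j => if j = k then (0 : MvPolynomial σ R) else X j)
      (∏ v ∈ s, (X (d v) : MvPolynomial σ R)) = 0 := by
  obtain ⟨v, hv, rfl⟩ := hd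
  rw [map_prod]
  exact prod_eq_zero hv (by simp)

theorem notMem_vars_of_pderiv_eq_zero [NoZeroDivisors R] [CharZero R] {i : σ}
    {p : MvPolynomial σ R} (h : pderiv i p = 0) : i ∉ p.vars := by
  classical
  rw [mem_vars_iff_mem_support]
  rintro ⟨m, hm, hi⟩
  have hle : Finsupp.single i 1 ≤ m := by
    rwa [Finsupp.single_le_iff, Nat.one_le_iff_ne_zero, ← Finsupp.mem_support_iff]
  have hcoeff := coeff_pderiv (i := i) p (m - Finsupp.single i 1)
  rw [h, coeff_zero, tsub_add_cancel_of_le hle] at hcoeff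
  exact mul_ne_zero (mem_support_iff.mp hm) (Nat.cast_add_one_ne_zero _) hcoeff.symm

theorem eq_zero_of_pderiv_eq_zero_of_aeval_eq_zero [NoZeroDivisors R] [CharZero R]
    [DecidableEq σ] {i : σ} {p : MvPolynomial σ R} (h : pderiv i p = 0)
    (h₀ : aeval (fun j => if j = i then (0 : MvPolynomial σ R) else X j) p = 0) : p = 0 := by
  have hvars : (p.vars : Set σ) ⊆ {i}ᶜ := fun j hj hji =>
    notMem_vars_of_pderiv_eq_zero h (hji ▸ hj)
  rw [← aeval_ite_mem_eq_self p hvars]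
  convert h₀ using 3
  simp

end MvPolynomial

theorem eq_or_exists_eq_coe_compl_singleton {W : Type*} (ℓ b : W) :
    b = ℓ ∨ ∃ b' : ({ℓ}ᶜ : Set W), b = b' := by
  by_cases h : b = ℓ
  exacts [Or.inl h, Or.inr ⟨⟨b, h⟩, rfl⟩]

namespace SimpleGraph

theorem vdeg_iso {V W : Type*} {G : SimpleGraph V} {H : SimpleGraph W} (φ : G ≃g H) (v : V) :
    vdeg H (φ v) = vdeg G v := by
  rw [vdeg, vdeg, ← Set.ncard_image_of_injective _ φ.injective]
  congr 1
  ext w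
  obtain ⟨x, rfl⟩ := φ.surjective w
  simp [φ.map_adj_iff]

theorem vdeg_eq_degree {V : Type*} (G : SimpleGraph V) (v : V) [Fintype (G.neighborSet v)] :
    vdeg G v = G.degree v := by
  rw [vdeg, ← card_neighborSet_eq_degree, ← Nat.card_coe_set_eq, Nat.card_eq_fintype_card]

theorem vdeg_lt_card {V : Type*} [Fintype V] (G : SimpleGraph V) (v : V) :
    vdeg G v < Fintype.card V := by
  classical
  rw [vdeg_eq_degree]
  exact G.degree_lt_card_verts v

theorem IsTree.exists_vdeg_eq_one {V : Type*} [Finite V] [Nontrivial V] {T : SimpleGraph V}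
    (hT : T.IsTree) : ∃ v, vdeg T v = 1 := by
  have := Fintype.ofFinite V
  classical
  simpa only [vdeg_eq_degree] using hT.exists_vert_degree_one_of_nontrivial

theorem Connected.vdeg_ne_zero {V : Type*} [Finite V] [Nontrivial V] {T : SimpleGraph V}
    (hT : T.Connected) (v : V) : vdeg T v ≠ 0 := by
  have := Fintype.ofFinite V
  classical
  rw [vdeg_eq_degree]
  exact (hT.preconnected.degree_pos_of_nontrivial v).ne'

section Graft

variable {W : Type*} {ℓ : W} {T : SimpleGraph ({ℓ}ᶜ : Set W)} {v : ({ℓ}ᶜ : Set W)}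

variable (ℓ) in
def graft (T : SimpleGraph ({ℓ}ᶜ : Set W)) (v : ({ℓ}ᶜ : Set W)) : SimpleGraph W :=
  T.map (Function.Embedding.subtype _) ⊔ edge ℓ v

theorem graft_adj_coe {a b : ({ℓ}ᶜ : Set W)} : (graft ℓ T v).Adj a b ↔ T.Adj a b := by
  have ha : (a : W) ≠ ℓ := a.2
  have hb : (b : W) ≠ ℓ := b.2
  simp only [graft, sup_adj, edge_adj, ha, hb, false_and, and_false, or_self, or_false]
  exact map_adj_apply

theorem graft_adj_self {b : W} : (graft ℓ T v).Adj ℓ b ↔ b = v := by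
  simp only [graft, sup_adj, map_adj, edge_adj]
  constructor
  · rintro (⟨a, -, -, ha, -⟩ | ⟨⟨-, rfl⟩ | ⟨hv, -⟩, -⟩)
    exacts [absurd ha a.2, rfl, absurd hv.symm v.2]
  · rintro rfl
    exact Or.inr ⟨by simp, fun h => v.2 h.symm⟩

theorem neighborSet_graft_self : (graft ℓ T v).neighborSet ℓ = {(v : W)} := by
  ext w
  exact graft_adj_self

theorem neighborSet_graft_of_ne {w : ({ℓ}ᶜ : Set W)} (hw : w ≠ v) :
    (graft ℓ T v).neighborSet w = Subtype.val '' T.neighborSet w := by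
  ext b
  obtain rfl | ⟨b, rfl⟩ := eq_or_exists_eq_coe_compl_singleton ℓ b
  · simp [adj_comm, graft_adj_self, Subtype.coe_ne_coe.mpr hw]
  · simp [graft_adj_coe, show (b : W) ≠ ℓ from b.2]

theorem neighborSet_graft_root :
    (graft ℓ T v).neighborSet v = insert ℓ (Subtype.val '' T.neighborSet v) := by
  ext b
  obtain rfl | ⟨b, rfl⟩ := eq_or_exists_eq_coe_compl_singleton ℓ b
  · simp [adj_comm, graft_adj_self]
  · simp [graft_adj_coe, show (b : W) ≠ ℓ from b.2]

theorem vdeg_graft_self : vdeg (graft ℓ T v) ℓ = 1 := by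
  rw [vdeg, neighborSet_graft_self, Set.ncard_singleton]

theorem vdeg_graft_of_ne {w : ({ℓ}ᶜ : Set W)} (hw : w ≠ v) :
    vdeg (graft ℓ T v) w = vdeg T w := by
  rw [vdeg, neighborSet_graft_of_ne hw, Set.ncard_image_of_injective _ Subtype.val_injective,
    vdeg]

theorem vdeg_graft_root [Finite W] : vdeg (graft ℓ T v) v = vdeg T v + 1 := by
  rw [vdeg, neighborSet_graft_root, Set.ncard_insert_of_notMem (by simp),
    Set.ncard_image_of_injective _ Subtype.val_injective, vdeg]

theorem induce_graft : (graft ℓ T v).induce {ℓ}ᶜ = T := by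
  ext a b
  exact graft_adj_coe

theorem edgeSet_graft : (graft ℓ T v).edgeSet =
    insert s(ℓ, v) ((Function.Embedding.subtype _).sym2Map '' T.edgeSet) := by
  rw [graft, edgeSet_sup, edgeSet_map, edgeSet_edge_of_ne (fun h => v.2 h.symm), Set.union_comm,
    Set.singleton_union]

theorem IsTree.graft [Finite W] (hT : T.IsTree) : (graft ℓ T v).IsTree := by
  rw [isTree_iff_connected_and_card] at hT ⊢
  refine ⟨(connected_iff_exists_forall_reachable _).mpr ⟨v, fun b => ?_⟩, ?_⟩
  · obtain rfl | ⟨b, rfl⟩ := eq_or_exists_eq_coe_compl_singleton ℓ b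
    · exact (graft_adj_self.mpr rfl).reachable.symm
    · exact (hT.1 v b).map ⟨Subtype.val, graft_adj_coe.mpr⟩
  · have hℓ : s(ℓ, (v : W)) ∉ (Function.Embedding.subtype _).sym2Map '' T.edgeSet := by
      rintro ⟨e, -, he⟩
      have hℓe : ℓ ∈ (Function.Embedding.subtype _).sym2Map e := by
        rw [he]
        exact Sym2.mem_mk_left _ _
      obtain ⟨a, -, ha⟩ := Sym2.mem_map.mp hℓe
      exact a.2 ha
    rw [Nat.card_coe_set_eq, edgeSet_graft, Set.ncard_insert_of_notMem hℓ,
      Set.ncard_image_of_injective _ (Function.Embedding.injective _),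
      ← Nat.card_coe_set_eq, hT.2, Nat.card_coe_set_eq, ← Set.ncard_singleton ℓ,
      Set.ncard_compl_add_ncard]

theorem IsTree.induce_compl_singleton [Finite W] {G : SimpleGraph W} (hG : G.IsTree)
    (hℓ : vdeg G ℓ = 1) : (G.induce {ℓ}ᶜ).IsTree := by
  have := Fintype.ofFinite W
  classical
  exact ⟨hG.connected.induce_compl_singleton_of_degree_eq_one (by rwa [← vdeg_eq_degree]),
    hG.isAcyclic.induce _⟩

theorem graft_induce_compl_singleton {G : SimpleGraph W} {u : ({ℓ}ᶜ : Set W)}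
    (hu : G.neighborSet ℓ = {(u : W)}) : graft ℓ (G.induce {ℓ}ᶜ) u = G := by
  have hℓ : ∀ b : W, (graft ℓ (G.induce {ℓ}ᶜ) u).Adj ℓ b ↔ G.Adj ℓ b := fun b => by
    rw [graft_adj_self, ← mem_neighborSet, hu, Set.mem_singleton_iff]
  ext a b
  obtain rfl | ⟨a, rfl⟩ := eq_or_exists_eq_coe_compl_singleton ℓ a
  · exact hℓ b
  obtain rfl | ⟨b, rfl⟩ := eq_or_exists_eq_coe_compl_singleton ℓ b
  · rw [adj_comm, hℓ, adj_comm]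
  · exact graft_adj_coe

end Graft

end SimpleGraph

section TreeSum

open Classical in
noncomputable def trees (V : Type*) [Fintype V] [DecidableEq V] : Finset (SimpleGraph V) :=
  univ.filter IsTree

@[simp]
theorem mem_trees {V : Type*} [Fintype V] [DecidableEq V] {T : SimpleGraph V} :
    T ∈ trees V ↔ T.IsTree := by
  simp [trees]

noncomputable def treeSum (V : Type*) [Fintype V] [DecidableEq V] : MvPolynomial ℕ ℚ :=
  ∑ T ∈ trees V, ∏ v, X (vdeg T v)

variable {V W : Type*} [Fintype V] [DecidableEq V] [Fintype W] [DecidableEq W]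

theorem treeSum_congr (e : V ≃ W) : treeSum V = treeSum W := by
  refine sum_equiv e.simpleGraph (fun T => ?_) (fun T _ => ?_)
  · simp only [mem_trees, Equiv.simpleGraph_apply, (Iso.comap e.symm T).isTree_iff]
  · rw [← e.symm.prod_comp]
    exact prod_congr rfl fun w _ => congrArg X (vdeg_iso (Iso.comap e.symm T) w)

theorem pderiv_one_treeSum :
    pderiv 1 (treeSum W) =
      ∑ ℓ : W, ∑ T ∈ trees W with vdeg T ℓ = 1, ∏ w ∈ univ.erase ℓ, X (vdeg T w) := by
  simp only [treeSum, map_sum, pderiv_prod_X, sum_filter]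
  exact sum_comm

theorem sum_trees_with_leaf (ℓ : W) :
    ∑ T ∈ trees W with vdeg T ℓ = 1, ∏ w ∈ univ.erase ℓ, (X (vdeg T w) : MvPolynomial ℕ ℚ) =
      ∑ T ∈ trees ({ℓ}ᶜ : Set W), ∑ v,
        X (vdeg T v + 1) * ∏ w ∈ univ.erase v, X (vdeg T w) := by
  rw [← sum_product']
  symm
  refine sum_bij (fun p _ => graft ℓ p.1 p.2) (fun p hp => ?_) (fun p _ q _ h => ?_)
    (fun G hG => ?_) (fun p _ => ?_)
  · rw [mem_product, mem_trees] at hp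
    rw [mem_filter, mem_trees]
    exact ⟨hp.1.graft, vdeg_graft_self⟩
  · have h₁ : p.1 = q.1 := by rw [← induce_graft (T := p.1) (v := p.2), h, induce_graft]
    have h₂ := neighborSet_graft_self (T := p.1) (v := p.2)
    rw [h, neighborSet_graft_self] at h₂
    exact Prod.ext h₁ (Subtype.ext (Set.singleton_injective h₂).symm)
  · rw [mem_filter, mem_trees] at hG
    obtain ⟨u, hu⟩ := Set.ncard_eq_one.mp hG.2
    have huℓ : u ≠ ℓ := (G.ne_of_adj (show u ∈ G.neighborSet ℓ by simp [hu])).symm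
    refine ⟨(G.induce {ℓ}ᶜ, ⟨u, huℓ⟩), ?_, graft_induce_compl_singleton hu⟩
    rw [mem_product, mem_trees]
    exact ⟨hG.1.induce_compl_singleton hG.2, mem_univ _⟩
  · obtain ⟨T, v⟩ := p
    rw [prod_subtype (univ.erase ℓ) (p := (· ∈ ({ℓ}ᶜ : Set W))) (by simp),
      ← mul_prod_erase univ _ (mem_univ v), vdeg_graft_root]
    congr 1
    exact prod_congr rfl fun w hw => by rw [vdeg_graft_of_ne (ne_of_mem_erase hw)]

theorem sum_trees_X_vdeg_succ :
    ∑ T ∈ trees V, ∑ v,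
        (X (vdeg T v + 1) : MvPolynomial ℕ ℚ) * ∏ w ∈ univ.erase v, X (vdeg T w) =
      ∑ i ∈ range (Fintype.card V), X (i + 1) * pderiv i (treeSum V) := by
  simp only [treeSum, map_sum, mul_sum]
  refine (sum_congr rfl fun T _ => ?_).trans sum_comm
  exact (sum_X_mul_pderiv_prod_X (· + 1) fun v _ => mem_range.mpr (vdeg_lt_card T v)).symm

theorem pderiv_one_treeSum_of_card_eq {n : ℕ} (hW : Fintype.card W = n + 1) :
    pderiv 1 (treeSum W) = (n + 1) • ∑ i ∈ range n, X (i + 1) * pderiv i (treeSum (Fin n)) := by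
  rw [pderiv_one_treeSum, sum_eq_card_nsmul fun ℓ _ => ?_, card_univ, hW]
  have hcard : Fintype.card ({ℓ}ᶜ : Set W) = n := by
    rw [Fintype.card_compl_set, hW]
    simp
  rw [sum_trees_with_leaf, sum_trees_X_vdeg_succ, hcard,
    treeSum_congr (Fintype.equivFinOfCardEq hcard)]

end TreeSum

theorem Upoly_eq_smul_treeSum (n : ℕ) :
    Upoly n = (1 / (n.factorial : ℚ)) • treeSum (Fin n) :=
  rfl

theorem pderiv_one_Upoly_succ (n : ℕ) :
    pderiv 1 (Upoly (n + 1)) = ∑ i ∈ range n, X (i + 1) * pderiv i (Upoly n) := by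
  rw [Upoly_eq_smul_treeSum, Upoly_eq_smul_treeSum, Derivation.map_smul,
    pderiv_one_treeSum_of_card_eq (Fintype.card_fin _), ← Nat.cast_smul_eq_nsmul ℚ, smul_smul,
    smul_sum]
  refine sum_congr rfl fun i _ => ?_
  rw [Derivation.map_smul, mul_smul_comm, Nat.factorial_succ]
  congr 1
  push_cast
  field_simp

theorem aeval_Upoly_eq_zero {n : ℕ} (hn : 2 ≤ n) :
    aeval (fun j : ℕ => if j = 1 then (0 : MvPolynomial ℕ ℚ) else X j) (Upoly n) = 0 := by
  have : Nontrivial (Fin n) := Fin.nontrivial_iff_two_le.mpr hn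
  rw [Upoly_eq_smul_treeSum, treeSum, map_smul, map_sum]
  refine smul_eq_zero_of_right _ (sum_eq_zero fun T hT => aeval_prod_X_eq_zero ?_)
  obtain ⟨v, hv⟩ := (mem_trees.mp hT).exists_vdeg_eq_one
  exact ⟨v, mem_univ v, hv⟩

theorem pderiv_zero_Upoly {n : ℕ} (hn : 2 ≤ n) : pderiv 0 (Upoly n) = 0 := by
  have : Nontrivial (Fin n) := Fin.nontrivial_iff_two_le.mpr hn
  rw [Upoly_eq_smul_treeSum, treeSum, Derivation.map_smul, map_sum]
  exact smul_eq_zero_of_right _ (sum_eq_zero fun T hT =>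
    pderiv_prod_X_eq_zero fun v _ => (mem_trees.mp hT).connected.vdeg_ne_zero v)

theorem pderiv_one_Upoly_add_three (m : ℕ) :
    pderiv 1 (Upoly (m + 3)) = X 2 * pderiv 1 (Upoly (m + 2)) +
      ∑ i ∈ Icc 2 (m + 1), X (i + 1) * pderiv i (Upoly (m + 2)) := by
  rw [pderiv_one_Upoly_succ, show range (m + 2) = insert 0 (insert 1 (Icc 2 (m + 1))) by
      ext; simp; omega,
    sum_insert (by simp), sum_insert (by simp), pderiv_zero_Upoly (by omega), mul_zero, zero_add]

theorem Upoly_one : Upoly 1 = X 0 := by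
  have htrees : trees (Fin 1) = {⊥} := by
    ext T
    rw [mem_trees, mem_singleton, Subsingleton.elim T ⊥]
    exact iff_of_true IsTree.of_subsingleton rfl
  rw [Upoly_eq_smul_treeSum, treeSum, htrees, sum_singleton]
  simp [vdeg]

theorem Upoly_two : Upoly 2 = (1 / 2 : ℚ) • X 1 ^ 2 := by
  refine sub_eq_zero.mp (eq_zero_of_pderiv_eq_zero_of_aeval_eq_zero (i := 1) ?_ ?_)
  · rw [map_sub, pderiv_one_Upoly_succ, Upoly_one, sum_range_one, zero_add, pderiv_X_self,
      Derivation.map_smul, pderiv_pow, pderiv_X_self, mul_one, mul_one, Nat.cast_ofNat, pow_one,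
      two_mul]
    module
  · rw [map_sub, aeval_Upoly_eq_zero le_rfl]
    simp

/-- `U_2(δ_1) = δ_1²/2`, and for `n ≥ 3`,
`U_n = δ_2 U_{n-1} + ∑_{i=2}^{n-2} δ_{i+1} ∫_0^{δ_1} ∂U_{n-1}/∂δ_i dx`, where the
"integral" `J i` is characterized by `∂(J i)/∂δ_1 = ∂U_{n-1}/∂δ_i` and `J i` vanishes
at `δ_1 = 0`. -/
theorem Upoly_recurrence :
    Upoly 2 = (1 / 2 : ℚ) • (X 1) ^ 2 ∧
    ∀ n : ℕ, 3 ≤ n → ∀ J : ℕ → MvPolynomial ℕ ℚ,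
      (∀ i ∈ Finset.Icc 2 (n - 2),
        pderiv 1 (J i) = pderiv i (Upoly (n - 1)) ∧
        aeval (fun j : ℕ => if j = 1 then (0 : MvPolynomial ℕ ℚ) else X j) (J i) = 0) →
      Upoly n = X 2 * Upoly (n - 1) +
        ∑ i ∈ Finset.Icc 2 (n - 2), X (i + 1) * J i := by
  refine ⟨Upoly_two, fun n hn J hJ => ?_⟩
  obtain ⟨m, rfl⟩ : ∃ m, n = m + 3 := ⟨n - 3, by omega⟩
  simp only [show m + 3 - 1 = m + 2 from rfl, show m + 3 - 2 = m + 1 from rfl] at hJ ⊢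
  refine sub_eq_zero.mp (eq_zero_of_pderiv_eq_zero_of_aeval_eq_zero (i := 1) ?_ ?_)
  · rw [map_sub, sub_eq_zero, pderiv_one_Upoly_add_three, map_add, map_sum, pderiv_mul,
      pderiv_X_of_ne (by norm_num), zero_mul, zero_add]
    refine congrArg _ (sum_congr rfl fun i hi => ?_)
    rw [pderiv_mul, (hJ i hi).1, pderiv_X_of_ne (by grind), zero_mul, zero_add]
  · rw [map_sub, map_add, map_mul, map_sum,
      sum_eq_zero fun i hi => by rw [map_mul, (hJ i hi).2, mul_zero],
      aeval_Upoly_eq_zero (by omega), aeval_Upoly_eq_zero (by omega), mul_zero, add_zero,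
      sub_zero]
end

section
/- Fix λ ∈ ℝ and r ∈ ℕ, and let M(n) := ⌈ (n/2)·(1 + λ·n^{−1/3}) ⌉. Then the ratio [ n! / ( C(C(n,2), M(n)) · (n − M(n) + r)! ) ] / [ √(2πn) · 2^{n − M(n) + r} · n^{−r} · exp( −λ³/6 + 3/4 − n ) ] tends to 1 as n → ∞. -/
/-
Write `C(N, M) = N^{(M)} / M!` with `N = C(n, 2)`, `K = n - M + r`, and apply Stirling's formula to
`n!`, `M!` and `K!`. Since `M/N → 0` and `M²/N → 1/2`, the falling factorial satisfies
`N^{(M)} ~ e^{-1/4} N^M`, and `N^M = (n²/2)^M (1 - 1/n)^M` with `(1 - 1/n)^M → e^{-1/2}`.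
What is left is `(2M/n)^M (n/2K)^K e^{K-M} = exp((n/2)(h(x) - h(y)))`, where
`h(u) = (1+u) log(1+u) - u`, `x = 2M/n - 1` and `y = 2K/n - 1`. As `h(u) = u²/2 - u³/6 + O(u⁴)`,
`n(x + y) = 2r`, `n x³ → λ³` and `n y³ → -λ³`, this tends to `e^{-λ³/6}`; the constants
`e^{1/2} e^{1/4}` then cancel the `e^{3/4}` of the normalisation.
-/

open Filter Real Topology Finset Stirling
open scoped Nat

theorem abs_log_one_sub_add_le {u : ℝ} (hu : |u| ≤ 1 / 2) : |log (1 - u) + u| ≤ 2 * u ^ 2 := by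
  have h := abs_log_sub_add_sum_range_le (hu.trans_lt (by norm_num)) 1
  simp only [range_one, sum_singleton, zero_add, pow_one, Nat.cast_zero] at h
  calc |log (1 - u) + u| = |u / 1 + log (1 - u)| := by rw [div_one, add_comm]
    _ ≤ |u| ^ 2 / (1 - |u|) := h
    _ ≤ 2 * u ^ 2 := by
      rw [div_le_iff₀ (by linarith), sq_abs]
      nlinarith [sq_nonneg u]

/-- Bennett's function. -/
noncomputable def bennett (u : ℝ) : ℝ := (1 + u) * log (1 + u) - u

theorem abs_bennett_sub_le {u : ℝ} (hu : |u| ≤ 1 / 2) :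
    |bennett u - (u ^ 2 / 2 - u ^ 3 / 6)| ≤ 4 * u ^ 4 := by
  have h := abs_log_sub_add_sum_range_le (x := -u) (by rw [abs_neg]; linarith) 3
  simp only [sum_range_succ, range_one, sum_singleton, abs_neg, sub_neg_eq_add] at h
  set E := log (1 + u) - (u - u ^ 2 / 2 + u ^ 3 / 3)
  have hE : |E| ≤ 2 * u ^ 4 := by
    calc |E| ≤ |u| ^ 4 / (1 - |u|) := by convert h using 2; push_cast; ring
      _ ≤ 2 * u ^ 4 := by
        rw [div_le_iff₀ (by linarith), Even.pow_abs (by decide)]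
        nlinarith [mul_le_mul_of_nonneg_left hu (by positivity : (0 : ℝ) ≤ u ^ 4)]
  have hu1 : |1 + u| ≤ 3 / 2 := by rw [abs_le] at hu ⊢; constructor <;> linarith
  calc |bennett u - (u ^ 2 / 2 - u ^ 3 / 6)| = |u ^ 4 / 3 + (1 + u) * E| := by
        congr 1; simp only [bennett, E]; ring
    _ ≤ u ^ 4 / 3 + |1 + u| * |E| := by
        refine (abs_add_le _ _).trans ?_
        rw [abs_mul, abs_of_nonneg (by positivity)]
    _ ≤ 4 * u ^ 4 := by nlinarith [abs_nonneg E, abs_nonneg (1 + u), pow_nonneg (abs_nonneg u) 4]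

theorem descFactorial_div_pow_eq_prod {N M : ℕ} (h : M ≤ N) :
    (N.descFactorial M : ℝ) / (N : ℝ) ^ M = ∏ i ∈ range M, (1 - (i : ℝ) / N) := by
  rw [Nat.descFactorial_eq_prod_range, Nat.cast_prod,
    show (N : ℝ) ^ M = ∏ _i ∈ range M, (N : ℝ) by simp, ← prod_div_distrib]
  refine prod_congr rfl fun i hi => ?_
  have hi := mem_range.mp hi
  have hN : (N : ℝ) ≠ 0 := by exact_mod_cast (show N ≠ 0 by omega)
  rw [Nat.cast_sub (by omega)]
  field_simp

theorem abs_log_descFactorial_div_pow_add_le {N M : ℕ} (h : 2 * M ≤ N) :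
    |log ((N.descFactorial M : ℝ) / (N : ℝ) ^ M) + (M : ℝ) ^ 2 / (2 * N)| ≤
      (M : ℝ) / (2 * N) + 2 * (M : ℝ) ^ 3 / (N : ℝ) ^ 2 := by
  rcases M.eq_zero_or_pos with rfl | hM
  · simp
  have hN : (0 : ℝ) < N := by exact_mod_cast (show 0 < N by omega)
  have hu : ∀ i ∈ range M, |(i : ℝ) / N| ≤ 1 / 2 := fun i hi => by
    have : (2 * i : ℝ) ≤ N := by exact_mod_cast (by have := mem_range.mp hi; omega : 2 * i ≤ N)
    rw [abs_of_nonneg (by positivity), div_le_iff₀ hN]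
    linarith
  have hsum : ∑ i ∈ range M, (i : ℝ) / N = M ^ 2 / (2 * N) - M / (2 * N) := by
    have hgauss : (∑ i ∈ range M, (i : ℝ)) * 2 = M * (M - 1) := by
      have := Finset.sum_range_id_mul_two M
      rw [← Nat.cast_sum, ← Nat.cast_pred hM]
      exact_mod_cast this
    rw [← sum_div]
    field_simp
    linarith
  have hsq : ∑ i ∈ range M, 2 * ((i : ℝ) / N) ^ 2 ≤ 2 * (M : ℝ) ^ 3 / (N : ℝ) ^ 2 := by
    calc ∑ i ∈ range M, 2 * ((i : ℝ) / N) ^ 2 ≤ ∑ _i ∈ range M, 2 * ((M : ℝ) / N) ^ 2 := by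
          gcongr with i hi
          exact_mod_cast (mem_range.mp hi).le
      _ = 2 * (M : ℝ) ^ 3 / (N : ℝ) ^ 2 := by rw [sum_const, card_range, nsmul_eq_mul]; ring
  rw [descFactorial_div_pow_eq_prod (by omega),
    log_prod fun i hi => by linarith [(abs_le.mp (hu i hi)).2]]
  calc |∑ i ∈ range M, log (1 - (i : ℝ) / N) + M ^ 2 / (2 * N)|
      = |∑ i ∈ range M, (log (1 - (i : ℝ) / N) + i / N) + M / (2 * N)| := by
        rw [sum_add_distrib, hsum]; congr 1; ring
    _ ≤ ∑ i ∈ range M, |log (1 - (i : ℝ) / N) + i / N| + M / (2 * N) := by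
        refine (abs_add_le _ _).trans ?_
        rw [abs_of_nonneg (by positivity : (0 : ℝ) ≤ M / (2 * N))]
        gcongr
        exact abs_sum_le_sum_abs _ _
    _ ≤ M / (2 * N) + 2 * M ^ 3 / N ^ 2 := by
        have := sum_le_sum fun i hi => abs_log_one_sub_add_le (hu i hi)
        linarith

variable {ι : Type*} {l : Filter ι}

theorem tendsto_descFactorial_div_pow {N M : ι → ℕ} {a : ℝ} (hN : ∀ᶠ i in l, 0 < N i)
    (h₁ : Tendsto (fun i => (M i : ℝ) / N i) l (𝓝 0))
    (h₂ : Tendsto (fun i => (M i : ℝ) ^ 2 / N i) l (𝓝 a)) :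
    Tendsto (fun i => ((N i).descFactorial (M i) : ℝ) / (N i : ℝ) ^ M i) l
      (𝓝 (exp (-(a / 2)))) := by
  have hsmall : ∀ᶠ i in l, 2 * M i ≤ N i := by
    filter_upwards [hN, h₁.eventually_le_const (show (0 : ℝ) < 1 / 2 by norm_num)] with i hNi hi
    have hNi' : (0 : ℝ) < N i := by exact_mod_cast hNi
    rw [div_le_iff₀ hNi'] at hi
    exact_mod_cast (by linarith : (2 * M i : ℝ) ≤ N i)
  have herr : Tendsto (fun i => (M i : ℝ) / (2 * N i) + 2 * (M i : ℝ) ^ 3 / (N i : ℝ) ^ 2) l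
      (𝓝 0) := by
    have := (h₁.div_const 2).add ((h₂.mul h₁).const_mul 2)
    rw [zero_div, mul_zero, mul_zero, add_zero] at this
    refine this.congr fun i => ?_
    rw [div_mul_eq_div_div_swap]
    ring
  have hlog : Tendsto (fun i => log (((N i).descFactorial (M i) : ℝ) / (N i : ℝ) ^ M i)) l
      (𝓝 (-(a / 2))) := by
    have hrem := squeeze_zero_norm' (hsmall.mono fun i hi =>
      (norm_eq_abs _).trans_le (abs_log_descFactorial_div_pow_add_le hi)) herr
    have := (h₂.div_const 2).neg.add hrem
    rw [add_zero] at this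
    refine this.congr fun i => ?_
    ring
  refine ((continuous_exp.tendsto _).comp hlog).congr' ?_
  filter_upwards [hN, hsmall] with i hNi hi
  have : 0 < (N i).descFactorial (M i) := by
    rw [Nat.pos_iff_ne_zero, Ne, Nat.descFactorial_eq_zero_iff_lt]; omega
  exact exp_log (div_pos (by exact_mod_cast this) (pow_pos (by exact_mod_cast hNi) _))

theorem tendsto_one_sub_inv_pow {k : ι → ℝ} {m : ι → ℕ} {t : ℝ} (hk : Tendsto k l atTop)
    (hm : Tendsto (fun i => m i / k i) l (𝓝 t)) :
    Tendsto (fun i => (1 - (k i)⁻¹) ^ m i) l (𝓝 (exp (-t))) := by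
  have h := hm.mul ((tendsto_mul_log_one_add_div_atTop (-1)).comp hk)
  rw [mul_neg_one] at h
  refine ((continuous_exp.tendsto _).comp h).congr' ?_
  filter_upwards [hk.eventually_gt_atTop 1] with i hi
  have hk0 : k i ≠ 0 := by positivity
  have hk1 : 0 < 1 - (k i)⁻¹ := by rw [sub_pos]; exact inv_lt_one_of_one_lt₀ hi
  calc exp (m i / k i * (k i * log (1 + -1 / k i))) = exp (m i * log (1 - (k i)⁻¹)) := by
        rw [neg_div, ← sub_eq_add_neg, one_div, ← mul_assoc, div_mul_cancel₀ _ hk0]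
    _ = (1 - (k i)⁻¹) ^ m i := by rw [exp_nat_mul, exp_log hk1]

theorem tendsto_mul_bennett_sub_sq {s x : ι → ℝ} {a : ℝ} (hx : Tendsto x l (𝓝 0))
    (hsx : Tendsto (fun i => s i * x i ^ 3) l (𝓝 a)) :
    Tendsto (fun i => s i * (bennett (x i) - x i ^ 2 / 2)) l (𝓝 (-(a / 6))) := by
  have hbound : ∀ᶠ i in l,
      ‖s i * (bennett (x i) - (x i ^ 2 / 2 - x i ^ 3 / 6))‖ ≤ 4 * |s i * x i ^ 3| * |x i| := by
    have hx' : Tendsto (fun i => |x i|) l (𝓝 0) := by simpa using hx.abs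
    filter_upwards [hx'.eventually_le_const (by norm_num : (0 : ℝ) < 1 / 2)] with i hi
    rw [norm_eq_abs, abs_mul, abs_mul]
    calc |s i| * |bennett (x i) - (x i ^ 2 / 2 - x i ^ 3 / 6)| ≤ |s i| * (4 * x i ^ 4) := by
          gcongr; exact abs_bennett_sub_le hi
      _ = 4 * (|s i| * |x i ^ 3|) * |x i| := by
          rw [abs_pow, ← Even.pow_abs (by decide : Even 4) (x i)]; ring
  have hrem := squeeze_zero_norm' hbound (by simpa using (hsx.abs.const_mul 4).mul hx.abs)
  convert (hsx.div_const 6).neg.add hrem using 2 <;> ring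

theorem tendsto_mul_bennett_sub_bennett {s x y : ι → ℝ} {a b c : ℝ} (hx : Tendsto x l (𝓝 0))
    (hy : Tendsto y l (𝓝 0)) (hsx : Tendsto (fun i => s i * x i ^ 3) l (𝓝 a))
    (hsy : Tendsto (fun i => s i * y i ^ 3) l (𝓝 b))
    (hsxy : Tendsto (fun i => s i * (x i + y i)) l (𝓝 c)) :
    Tendsto (fun i => s i * (bennett (x i) - bennett (y i))) l (𝓝 ((b - a) / 6)) := by
  have := ((tendsto_mul_bennett_sub_sq hx hsx).sub (tendsto_mul_bennett_sub_sq hy hsy)).add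
    ((hsxy.mul (hx.sub hy)).div_const 2)
  convert this using 2 <;> ring

theorem pow_mul_pow_mul_exp_eq_exp_bennett {n m k : ℕ} (hn : 0 < n) (hm : 0 < m) (hk : 0 < k) :
    (2 * m / n : ℝ) ^ m * (n / (2 * k) : ℝ) ^ k * exp (k - m) =
      exp (n / 2 * (bennett (2 * m / n - 1) - bennett (2 * k / n - 1))) := by
  have hlog : log ((n : ℝ) / (2 * k)) = -log (2 * k / n) := by rw [← log_inv, inv_div]
  have harg : (n : ℝ) / 2 * (bennett (2 * m / n - 1) - bennett (2 * k / n - 1)) =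
      m * log (2 * m / n) + k * log (n / (2 * k)) + (k - m) := by
    simp only [bennett, add_sub_cancel, hlog]
    field_simp
    ring
  rw [harg, exp_add, exp_add, exp_nat_mul, exp_nat_mul, exp_log (by positivity),
    exp_log (by positivity)]

theorem factorial_eq_stirlingSeq_mul {a : ℕ} (ha : 0 < a) :
    (a ! : ℝ) = stirlingSeq a * √(2 * a) * (a ^ a / exp a) := by
  rw [stirlingSeq, ← exp_one_pow, ← div_pow]
  field_simp

theorem tendsto_stirlingSeq_mul_div {M K : ℕ → ℕ} (hM : Tendsto M atTop atTop)
    (hK : Tendsto K atTop atTop) :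
    Tendsto (fun n => stirlingSeq n * stirlingSeq (M n) / (stirlingSeq (K n) * √π))
      atTop (𝓝 1) := by
  have h := (tendsto_stirlingSeq_sqrt_pi.mul (tendsto_stirlingSeq_sqrt_pi.comp hM)).div
    ((tendsto_stirlingSeq_sqrt_pi.comp hK).mul_const √π) (by positivity)
  rwa [div_self (by positivity)] at h

theorem stirling_ratio_eq {n m k r : ℕ} (hn : 2 ≤ n) (hm : 0 < m) (hk : 0 < k)
    (hmk : m + k = n + r) (c : ℝ) :
    (n ! : ℝ) / ((n.choose 2).choose m * k !) / (√(2 * π * n) * 2 ^ k / (n : ℝ) ^ r * exp (c - n))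
      = stirlingSeq n * stirlingSeq m / (stirlingSeq k * √π) * √(m / k)
        / ((1 - (n : ℝ)⁻¹) ^ m * ((n.choose 2).descFactorial m / (n.choose 2 : ℝ) ^ m))
        * ((2 * m / n) ^ m * (n / (2 * k)) ^ k * exp (k - m)) * exp (-c) := by
  have hn1 : (1 : ℝ) < n := by exact_mod_cast hn
  have hchoose : ((n.choose 2).choose m : ℝ) = (n.choose 2).descFactorial m / m ! := by
    rw [Nat.descFactorial_eq_factorial_mul_choose]; push_cast; field_simp
  have hpow : (n : ℝ) ^ r = n ^ m * n ^ k / n ^ n := by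
    rw [eq_div_iff (by positivity), ← pow_add, ← pow_add, add_comm r, hmk]
  have hsqrt : √(2 * π * n) = √(2 * n) * √π := by rw [← sqrt_mul (by positivity)]; ring_nf
  have hsqrt' : √((m : ℝ) / k) = √(2 * m) / √(2 * k) := by
    rw [← sqrt_div (by positivity)]; congr 1; field_simp
  have hN : (1 - (n : ℝ)⁻¹) ^ m * ((n.choose 2).descFactorial m / (n.choose 2 : ℝ) ^ m)
      = (n.choose 2).descFactorial m / ((n : ℝ) ^ 2 / 2) ^ m := by
    rw [Nat.cast_choose_two, show (n : ℝ) * (n - 1) / 2 = n ^ 2 / 2 * (1 - (n : ℝ)⁻¹) by field_simp,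
      mul_pow]
    have : (1 : ℝ) - (n : ℝ)⁻¹ ≠ 0 := (sub_pos.mpr (inv_lt_one_of_one_lt₀ hn1)).ne'
    generalize 1 - (n : ℝ)⁻¹ = q at this ⊢
    field_simp
  rw [hchoose, hpow, hsqrt, hsqrt', hN, factorial_eq_stirlingSeq_mul (by omega : 0 < n),
    factorial_eq_stirlingSeq_mul hm, factorial_eq_stirlingSeq_mul hk, exp_sub, exp_sub, exp_neg,
    div_pow (n : ℝ), mul_pow 2 (k : ℝ), div_pow (2 * (m : ℝ)), mul_pow 2 (m : ℝ),
    div_pow ((n : ℝ) ^ 2)]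
  have hS : ∀ a : ℕ, a ≠ 0 → stirlingSeq a ≠ 0 := fun a ha =>
    ((sqrt_pos.mpr pi_pos).trans_le (sqrt_pi_le_stirlingSeq ha)).ne'
  have := hS n (by omega)
  have := hS m (by omega)
  have := hS k (by omega)
  field_simp
  ring

theorem tendsto_sq_div_choose_two :
    Tendsto (fun n : ℕ => (n : ℝ) ^ 2 / n.choose 2) atTop (𝓝 2) := by
  have h := (tendsto_one_div_atTop_nhds_zero_nat (𝕜 := ℝ)).const_sub 1
  rw [sub_zero] at h
  have h2 := (tendsto_const_nhds (x := (2 : ℝ))).div h one_ne_zero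
  rw [div_one] at h2
  refine h2.congr' ?_
  filter_upwards [eventually_gt_atTop 1] with n hn
  have : (1 : ℝ) < n := by exact_mod_cast hn
  have : (n : ℝ) - 1 ≠ 0 := by linarith
  rw [Pi.div_apply, Nat.cast_choose_two]
  field_simp

/-- `M n = n / 2 * (1 + lam * n ^ (-1/3) + o(n ^ (-1/3)))`. -/
def CriticalWindow (lam : ℝ) (M : ℕ → ℕ) : Prop :=
  Tendsto (fun n : ℕ => (n : ℝ) ^ (1 / 3 : ℝ) * (2 * M n / n - 1)) atTop (𝓝 lam)

namespace CriticalWindow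

variable {lam : ℝ} {M : ℕ → ℕ}

theorem tendsto_natCast_mul_cube (hM : CriticalWindow lam M) :
    Tendsto (fun n : ℕ => (n : ℝ) * (2 * M n / n - 1) ^ 3) atTop (𝓝 (lam ^ 3)) := by
  refine (hM.pow 3).congr fun n => ?_
  rw [mul_pow, ← rpow_natCast, ← rpow_mul n.cast_nonneg]
  norm_num

theorem tendsto_two_mul_div_sub_one (hM : CriticalWindow lam M) :
    Tendsto (fun n : ℕ => 2 * (M n : ℝ) / n - 1) atTop (𝓝 0) := by
  have h := ((tendsto_rpow_neg_atTop (by norm_num : (0 : ℝ) < 1 / 3)).comp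
    tendsto_natCast_atTop_atTop).mul hM
  rw [zero_mul] at h
  refine h.congr' ?_
  filter_upwards [eventually_gt_atTop 0] with n hn
  rw [Function.comp_apply, ← mul_assoc, ← rpow_add (by positivity)]
  simp

theorem tendsto_div (hM : CriticalWindow lam M) :
    Tendsto (fun n : ℕ => (M n : ℝ) / n) atTop (𝓝 (1 / 2)) := by
  have h := (hM.tendsto_two_mul_div_sub_one.const_add 1).div_const 2
  rw [add_zero] at h
  refine h.congr' ?_
  filter_upwards [eventually_gt_atTop 0] with n hn
  field_simp
  ring

theorem tendsto_atTop (hM : CriticalWindow lam M) : Tendsto M atTop atTop := by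
  rw [← tendsto_natCast_atTop_iff (R := ℝ)]
  refine (Tendsto.pos_mul_atTop (by norm_num) hM.tendsto_div tendsto_natCast_atTop_atTop).congr' ?_
  filter_upwards [eventually_gt_atTop 0] with n hn
  field_simp

theorem eventually_le (hM : CriticalWindow lam M) : ∀ᶠ n in atTop, M n ≤ n := by
  filter_upwards [hM.tendsto_div.eventually_le_const (by norm_num : (1 / 2 : ℝ) < 1),
    eventually_gt_atTop 0] with n h hn
  rw [div_le_one (by positivity)] at h
  exact_mod_cast h

theorem sub_add (hM : CriticalWindow lam M) (r : ℕ) :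
    CriticalWindow (-lam) (fun n => n - M n + r) := by
  have hr : Tendsto (fun n : ℕ => 2 * r * (n : ℝ) ^ (-(2 / 3) : ℝ)) atTop (𝓝 0) := by
    simpa using ((tendsto_rpow_neg_atTop (by norm_num : (0 : ℝ) < 2 / 3)).comp
      tendsto_natCast_atTop_atTop).const_mul (2 * r : ℝ)
  have h := hr.sub hM
  rw [zero_sub] at h
  refine h.congr' ?_
  filter_upwards [hM.eventually_le, eventually_gt_atTop 0] with n hle hn
  have hn' : (n : ℝ) ≠ 0 := by positivity
  rw [Nat.cast_add, Nat.cast_sub hle, show (-(2 / 3) : ℝ) = 1 / 3 - 1 by norm_num,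
    rpow_sub_one hn']
  field_simp
  ring

theorem tendsto_div_choose_two (hM : CriticalWindow lam M) :
    Tendsto (fun n : ℕ => (M n : ℝ) / n.choose 2) atTop (𝓝 0) := by
  have h := (hM.tendsto_div.mul tendsto_sq_div_choose_two).mul
    (tendsto_one_div_atTop_nhds_zero_nat (𝕜 := ℝ))
  rw [mul_zero] at h
  refine h.congr' ?_
  filter_upwards [eventually_gt_atTop 0] with n hn
  field_simp

theorem tendsto_sq_div_choose_two (hM : CriticalWindow lam M) :
    Tendsto (fun n : ℕ => (M n : ℝ) ^ 2 / n.choose 2) atTop (𝓝 (1 / 2)) := by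
  have h := (hM.tendsto_div.pow 2).mul _root_.tendsto_sq_div_choose_two
  norm_num at h
  refine h.congr' ?_
  filter_upwards [eventually_gt_atTop 0] with n hn
  field_simp

theorem tendsto_sqrt_div {μ : ℝ} {K : ℕ → ℕ} (hM : CriticalWindow lam M)
    (hK : CriticalWindow μ K) : Tendsto (fun n => √((M n : ℝ) / K n)) atTop (𝓝 1) := by
  have h := hM.tendsto_div.div hK.tendsto_div (by norm_num)
  rw [div_self (by norm_num)] at h
  have hMK : Tendsto (fun n => (M n : ℝ) / K n) atTop (𝓝 1) := by
    refine h.congr' ?_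
    filter_upwards [eventually_gt_atTop 0] with n hn
    rw [Pi.div_apply, div_div_div_cancel_right₀ (by positivity)]
  simpa using hMK.sqrt

theorem tendsto_half_mul_bennett_sub (hM : CriticalWindow lam M) (r : ℕ) :
    Tendsto (fun n : ℕ => (n : ℝ) / 2 *
      (bennett (2 * M n / n - 1) - bennett (2 * (n - M n + r : ℕ) / n - 1)))
      atTop (𝓝 (-(lam ^ 3 / 6))) := by
  have hK := hM.sub_add r
  have hsum : Tendsto (fun n : ℕ => (n : ℝ) / 2 *
      ((2 * M n / n - 1) + (2 * (n - M n + r : ℕ) / n - 1))) atTop (𝓝 r) := by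
    refine tendsto_const_nhds.congr' ?_
    filter_upwards [hM.eventually_le, eventually_gt_atTop 0] with n hle hn
    rw [Nat.cast_add, Nat.cast_sub hle]
    field_simp
    ring
  have hcube : ∀ {μ : ℝ} {P : ℕ → ℕ}, CriticalWindow μ P →
      Tendsto (fun n : ℕ => (n : ℝ) / 2 * (2 * P n / n - 1) ^ 3) atTop (𝓝 (μ ^ 3 / 2)) :=
    fun hP => (hP.tendsto_natCast_mul_cube.div_const 2).congr fun n => by ring
  convert tendsto_mul_bennett_sub_bennett hM.tendsto_two_mul_div_sub_one
    hK.tendsto_two_mul_div_sub_one (hcube hM) (hcube hK) hsum using 2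
  ring

end CriticalWindow

theorem criticalWindow_ceil (lam : ℝ) :
    CriticalWindow lam (fun n => ⌈(n : ℝ) / 2 * (1 + lam * (n : ℝ) ^ (-(1 / 3 : ℝ)))⌉₊) := by
  have hpow : ∀ p : ℝ, 0 < p → Tendsto (fun n : ℕ => (n : ℝ) ^ (-p)) atTop (𝓝 0) := fun p hp =>
    (tendsto_rpow_neg_atTop hp).comp tendsto_natCast_atTop_atTop
  have ht : ∀ᶠ n : ℕ in atTop, -1 ≤ lam * (n : ℝ) ^ (-(1 / 3 : ℝ)) := by
    have h := (hpow (1 / 3) (by norm_num)).const_mul lam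
    rw [mul_zero] at h
    exact h.eventually_const_le (by norm_num)
  have hup : Tendsto (fun n : ℕ => lam + 2 * (n : ℝ) ^ (-(2 / 3) : ℝ)) atTop (𝓝 lam) := by
    simpa using ((hpow _ (by norm_num)).const_mul 2).const_add lam
  have hkey : ∀ᶠ n : ℕ in atTop, ∀ m : ℝ, (n : ℝ) ^ (1 / 3 : ℝ) * (2 * m / n - 1) =
      lam + 2 * (n : ℝ) ^ (-(2 / 3) : ℝ) * (m - n / 2 * (1 + lam * (n : ℝ) ^ (-(1 / 3 : ℝ)))) := by
    filter_upwards [eventually_gt_atTop 0] with n hn m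
    have hn' : (0 : ℝ) < n := by exact_mod_cast hn
    have h1 : (n : ℝ) ^ (1 / 3 : ℝ) * (n : ℝ) ^ (-(1 / 3 : ℝ)) = 1 := by
      rw [← rpow_add hn']; norm_num
    have h2 : (n : ℝ) ^ (-(2 / 3) : ℝ) * n = (n : ℝ) ^ (1 / 3 : ℝ) := by
      rw [← rpow_add_one hn'.ne']; norm_num
    linear_combination (norm := skip)
      (1 - 2 * m / n + lam * (n : ℝ) ^ (-(1 / 3 : ℝ))) * h2 + lam * h1
    field_simp
    ring
  refine tendsto_of_tendsto_of_tendsto_of_le_of_le' tendsto_const_nhds hup ?_ ?_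
  · filter_upwards [hkey] with n hn
    rw [hn, le_add_iff_nonneg_right]
    exact mul_nonneg (by positivity) (sub_nonneg.mpr (Nat.le_ceil _))
  · filter_upwards [hkey, ht] with n hn htn
    rw [hn, add_le_add_iff_left]
    refine mul_le_of_le_one_right (by positivity) ?_
    have := Nat.ceil_lt_add_one (by nlinarith [n.cast_nonneg (α := ℝ)] :
      (0 : ℝ) ≤ n / 2 * (1 + lam * (n : ℝ) ^ (-(1 / 3 : ℝ))))
    linarith

theorem CriticalWindow.tendsto_stirling_ratio {lam : ℝ} {M : ℕ → ℕ} (hM : CriticalWindow lam M)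
    (r : ℕ) :
    Tendsto (fun n : ℕ => ((n ! : ℝ) / (((n.choose 2).choose (M n) : ℝ) * ((n - M n + r)! : ℝ))) /
      (√(2 * π * n) * 2 ^ (n - M n + r) / (n : ℝ) ^ r * exp (-lam ^ 3 / 6 + 3 / 4 - n)))
      atTop (𝓝 1) := by
  have hK := hM.sub_add r
  have hpow := tendsto_one_sub_inv_pow tendsto_natCast_atTop_atTop hM.tendsto_div
  have hD := tendsto_descFactorial_div_pow
    ((eventually_gt_atTop 1).mono fun n hn => Nat.choose_pos hn)
    hM.tendsto_div_choose_two hM.tendsto_sq_div_choose_two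
  have hlim := ((((tendsto_stirlingSeq_mul_div hM.tendsto_atTop hK.tendsto_atTop).mul
    (hM.tendsto_sqrt_div hK)).div (hpow.mul hD) (by positivity)).mul
    ((continuous_exp.tendsto _).comp (hM.tendsto_half_mul_bennett_sub r))).mul_const
    (exp (-(-lam ^ 3 / 6 + 3 / 4)))
  have hval : 1 * 1 / (exp (-(1 / 2)) * exp (-(1 / 2 / 2))) * exp (-(lam ^ 3 / 6)) *
      exp (-(-lam ^ 3 / 6 + 3 / 4)) = 1 := by
    rw [one_mul, ← exp_add, div_eq_mul_inv, ← exp_neg, one_mul, ← exp_add, ← exp_add,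
      exp_eq_one_iff]
    ring
  rw [hval] at hlim
  refine hlim.congr' ?_
  filter_upwards [hM.eventually_le, hM.tendsto_atTop.eventually_gt_atTop 0,
    hK.tendsto_atTop.eventually_gt_atTop 0, eventually_ge_atTop 2] with n hle hM0 hK0 hn
  rw [stirling_ratio_eq hn hM0 hK0 (by omega),
    pow_mul_pow_mul_exp_eq_exp_bennett (by omega) hM0 hK0, Pi.div_apply, Function.comp_apply]

/-- Stirling-type estimate in the critical window: with
`M(n) = ⌈(n/2)(1 + λ n^{-1/3})⌉`,
`n!/(C(C(n,2),M)·(n-M+r)!) ∼ √(2πn) · 2^{n-M+r} · n^{-r} · exp(-λ³/6 + 3/4 - n)`. -/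
theorem stirling_ratio_critical (lam : ℝ) (r : ℕ) :
    Tendsto
      (fun n : ℕ =>
        letI M : ℕ := ⌈((n : ℝ) / 2) * (1 + lam * (n : ℝ) ^ (-(1 / 3 : ℝ)))⌉₊
        ((n.factorial : ℝ) /
            (((n.choose 2).choose M : ℝ) * ((n - M + r).factorial : ℝ))) /
          (Real.sqrt (2 * π * n) * 2 ^ (n - M + r) / (n : ℝ) ^ r *
            Real.exp (-lam ^ 3 / 6 + 3 / 4 - n)))
      atTop (nhds 1) :=
  (criticalWindow_ceil lam).tendsto_stirling_ratio r
end
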